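/- arXiv:2012.04786 — 3 statements merged into one kernel-verified Lean document; each statement's English description precedes it below -/
import Mathlib

section
/- If a Markov chain with transition kernel P and stationary distribution π satisfies the uniform minorization condition P^{n_0}(x,·) ≥ ε Q(·) for all x in the state space X (for some n_0 ∈ ℕ, ε > 0, and probability measure Q), then for all n ∈ ℕ and x ∈ X, the total variation distance ‖P^n(x,·) − π(·)‖ is at most (1−ε)^⌊n/n_0⌋. -/
/-!
Doeblin's argument. Write `P^{n₀}(x,·) = ε Q + (1 - ε) R_x`; two copies of the chain started
anywhere can be coupled to agree with probability `ε` after `n₀` steps, so every block of `n₀`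
steps shrinks the oscillation `sup_{y,z} |P^n(y,S) - P^n(z,S)|` by a factor `1 - ε`. Since `π`
is invariant, `π(S)` is a `π`-average of `P^n(·,S)` and hence lies within that oscillation of
`P^n(x,S)`.
-/

open MeasureTheory ProbabilityTheory Set
open scoped ENNReal

theorem ENNReal.abs_toReal_sub_le {a b c : ℝ≥0∞} (ha : a ≠ ∞) (hc : c ≠ ∞)
    (hab : a ≤ b + c) (hba : b ≤ a + c) : |a.toReal - b.toReal| ≤ c.toReal := by
  have hb : b ≠ ∞ := ne_top_of_le_ne_top (ENNReal.add_ne_top.2 ⟨ha, hc⟩) hba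
  have h₁ := ENNReal.toReal_mono (ENNReal.add_ne_top.2 ⟨hb, hc⟩) hab
  have h₂ := ENNReal.toReal_mono (ENNReal.add_ne_top.2 ⟨ha, hc⟩) hba
  rw [ENNReal.toReal_add hb hc] at h₁
  rw [ENNReal.toReal_add ha hc] at h₂
  exact abs_sub_le_iff.2 ⟨by linarith, by linarith⟩

section Coupling

variable {X : Type*} [MeasurableSpace X] {μ ν ρ : Measure X} {f : X → ℝ≥0∞} {c : ℝ≥0∞}

theorem lintegral_le_lintegral_add_of_le_add (hμν : μ univ = ν univ)
    (hf : ∀ z w, f z ≤ f w + c) :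
    ∫⁻ z, f z ∂μ ≤ ∫⁻ z, f z ∂ν + c * μ univ :=
  calc ∫⁻ z, f z ∂μ ≤ ∫⁻ _, (⨅ w, f w) + c ∂μ :=
        lintegral_mono fun z ↦ by rw [ENNReal.iInf_add]; exact le_iInf (hf z)
    _ = ∫⁻ _, ⨅ w, f w ∂ν + c * μ univ := by
        rw [lintegral_const, lintegral_const, add_mul, hμν]
    _ ≤ ∫⁻ z, f z ∂ν + c * μ univ := by gcongr with z; exact iInf_le f z

/-- The common part `ρ` of `μ` and `ν` contributes equally to both integrals, so only the
remaining mass `μ univ - ρ univ` pays for the oscillation of `f`. -/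
theorem lintegral_le_lintegral_add_of_common_le [IsFiniteMeasure ρ] (hρμ : ρ ≤ μ) (hρν : ρ ≤ ν)
    (hμν : μ univ = ν univ) (hf : ∀ z w, f z ≤ f w + c) :
    ∫⁻ z, f z ∂μ ≤ ∫⁻ z, f z ∂ν + c * (μ univ - ρ univ) := by
  have hrest : ∫⁻ z, f z ∂(μ - ρ) ≤ ∫⁻ z, f z ∂(ν - ρ) + c * (μ univ - ρ univ) := by
    rw [← Measure.sub_apply .univ hρμ]
    refine lintegral_le_lintegral_add_of_le_add ?_ hf
    rw [Measure.sub_apply .univ hρμ, Measure.sub_apply .univ hρν, hμν]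
  calc ∫⁻ z, f z ∂μ = ∫⁻ z, f z ∂(μ - ρ) + ∫⁻ z, f z ∂ρ := by
        rw [← lintegral_add_measure, Measure.sub_add_cancel_of_le hρμ]
    _ ≤ ∫⁻ z, f z ∂(ν - ρ) + c * (μ univ - ρ univ) + ∫⁻ z, f z ∂ρ := by gcongr
    _ = ∫⁻ z, f z ∂ν + c * (μ univ - ρ univ) := by
        rw [add_right_comm, ← lintegral_add_measure, Measure.sub_add_cancel_of_le hρν]

theorem abs_toReal_sub_lintegral_le [IsProbabilityMeasure μ] (hf : Measurable f) (hc : c ≠ ∞)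
    (hosc : ∀ z w, f z ≤ f w + c) (x : X) (hfx : f x ≠ ∞) :
    |(f x).toReal - (∫⁻ y, f y ∂μ).toReal| ≤ c.toReal := by
  have hxμ := lintegral_le_lintegral_add_of_le_add (μ := .dirac x) (ν := μ) (by simp) hosc
  have hμx := lintegral_le_lintegral_add_of_le_add (μ := μ) (ν := .dirac x) (by simp) hosc
  rw [lintegral_dirac' x hf, measure_univ, mul_one] at hxμ hμx
  exact ENNReal.abs_toReal_sub_le hfx hc hxμ hμx

end Coupling

namespace ProbabilityTheory.Kernel

variable {X : Type*} [MeasurableSpace X] {κ : Kernel X X}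

instance IsMarkovKernel.pow [IsMarkovKernel κ] (n : ℕ) : IsMarkovKernel (κ ^ n) := by
  induction n with
  | zero => rw [pow_zero]; exact inferInstanceAs (IsMarkovKernel Kernel.id)
  | succ n ih => rw [pow_succ]; exact IsMarkovKernel.comp _ _

theorem Invariant.pow {π : Measure X} (hκ : Invariant κ π) (n : ℕ) : Invariant (κ ^ n) π := by
  induction n with
  | zero => exact Measure.bind_dirac
  | succ n ih => rw [pow_succ]; exact ih.comp hκ

theorem coe_pow_eq_of_bind_succ {Pn : ℕ → X → Measure X}
    (hPn0 : ∀ x, Pn 0 x = Measure.dirac x) (hPnS : ∀ n x, Pn (n + 1) x = (Pn n x).bind κ)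
    (n : ℕ) : ⇑(κ ^ n) = Pn n := by
  induction n with
  | zero => ext1 x; rw [hPn0, pow_zero]; exact id_apply x
  | succ n ih => ext1 x; rw [hPnS, ← ih, pow_succ', ← comp_apply]; rfl

theorem pow_apply_le_pow_apply_add [IsMarkovKernel κ] {ρ : Measure X} [IsFiniteMeasure ρ]
    {n₀ : ℕ} (hρ : ∀ x, ρ ≤ (κ ^ n₀) x) {S : Set X} (hS : MeasurableSet S) (n : ℕ) (y z : X) :
    (κ ^ n) y S ≤ (κ ^ n) z S + (1 - ρ univ) ^ (n / n₀) := by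
  suffices ∀ k y z, (κ ^ (k * n₀ + n % n₀)) y S ≤
      (κ ^ (k * n₀ + n % n₀)) z S + (1 - ρ univ) ^ k by
    simpa only [Nat.div_add_mod'] using this (n / n₀) y z
  intro k
  induction k with
  | zero =>
    intro y z
    rw [zero_mul, zero_add, pow_zero, add_comm]
    exact prob_le_one.trans le_self_add
  | succ k ih =>
    intro y z
    rw [add_mul, one_mul, add_right_comm, add_comm, pow_add_apply_eq_lintegral _ _ _ _ hS,
      pow_add_apply_eq_lintegral _ _ _ _ hS, pow_succ]
    simpa only [measure_univ] using
      lintegral_le_lintegral_add_of_common_le (hρ y) (hρ z) (by simp only [measure_univ]) ih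

end ProbabilityTheory.Kernel

theorem stmt0_general {X : Type*} [MeasurableSpace X]
    (P : X → Measure X) (hPm : Measurable P)
    (hP : ∀ x, IsProbabilityMeasure (P x))
    (π Q : Measure X) [IsProbabilityMeasure π] [IsProbabilityMeasure Q]
    (hstat : π.bind P = π)
    (Pn : ℕ → X → Measure X)
    (hPn0 : ∀ x, Pn 0 x = Measure.dirac x)
    (hPnS : ∀ n x, Pn (n+1) x = (Pn n x).bind P)
    (n₀ : ℕ) (ε : ℝ) (hε : 0 < ε) (hε1 : ε ≤ 1)
    (hminor : ∀ x S, MeasurableSet S → ENNReal.ofReal ε * Q S ≤ Pn n₀ x S)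
    (n : ℕ) (x : X) (S : Set X) (hS : MeasurableSet S) :
    |(Pn n x S).toReal - (π S).toReal| ≤ (1 - ε) ^ (n / n₀) := by
  let κ : Kernel X X := ⟨P, hPm⟩
  have : IsMarkovKernel κ := ⟨hP⟩
  obtain rfl : (fun n ↦ ⇑(κ ^ n)) = Pn := funext (Kernel.coe_pow_eq_of_bind_succ hPn0 hPnS)
  have : IsFiniteMeasure (ENNReal.ofReal ε • Q) := Q.smul_finite ENNReal.ofReal_ne_top
  have hρ : ∀ x, ENNReal.ofReal ε • Q ≤ (κ ^ n₀) x := fun x ↦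
    Measure.le_iff.2 fun S hS ↦ by simpa using hminor x S hS
  have hosc := Kernel.pow_apply_le_pow_apply_add hρ hS n
  have hρ_univ : 1 - (ENNReal.ofReal ε • Q) univ = ENNReal.ofReal (1 - ε) := by
    rw [Measure.smul_apply, measure_univ, smul_eq_mul, mul_one, ENNReal.ofReal_sub _ hε.le,
      ENNReal.ofReal_one]
  rw [hρ_univ, ← ENNReal.ofReal_pow (sub_nonneg.2 hε1)] at hosc
  have hπ : Kernel.Invariant (κ ^ n) π := Kernel.Invariant.pow (κ := κ) hstat n
  have hπS : π S = ∫⁻ y, (κ ^ n) y S ∂π := by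
    conv_lhs => rw [← hπ.def, Measure.bind_apply hS (Kernel.aemeasurable _)]
  rw [hπS, ← ENNReal.toReal_ofReal (pow_nonneg (sub_nonneg.2 hε1) (n / n₀))]
  exact abs_toReal_sub_lintegral_le (Kernel.measurable_coe _ hS) ENNReal.ofReal_ne_top
    hosc x (measure_ne_top _ _)

/-- a uniform minorization condition implies uniform ergodicity with
explicit rate `(1-ε)^⌊n/n₀⌋`.  Here `Pn n x` denotes the `n`-step transition
probabilities `P^n(x,·)` of the chain with one-step kernel `P`, and `π` is a
stationary distribution. -/
theorem stmt0 {X : Type*} [MeasurableSpace X]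
    (P : X → Measure X) (hPm : Measurable P)
    (hP : ∀ x, IsProbabilityMeasure (P x))
    (π Q : Measure X) [IsProbabilityMeasure π] [IsProbabilityMeasure Q]
    (hstat : π.bind P = π)
    (Pn : ℕ → X → Measure X)
    (hPn0 : ∀ x, Pn 0 x = Measure.dirac x)
    (hPnS : ∀ n x, Pn (n+1) x = (Pn n x).bind P)
    (n₀ : ℕ) (hn₀ : 0 < n₀) (ε : ℝ) (hε : 0 < ε) (hε1 : ε ≤ 1)
    (hminor : ∀ x S, MeasurableSet S → ENNReal.ofReal ε * Q S ≤ Pn n₀ x S)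
    (n : ℕ) (x : X) (S : Set X) (hS : MeasurableSet S) :
    |(Pn n x S).toReal - (π S).toReal| ≤ (1 - ε) ^ (n / n₀) :=
  stmt0_general P hPm hP π Q hstat Pn hPn0 hPnS n₀ ε hε hε1 hminor n x S hS
end

section
/- Suppose a φ-irreducible Markov chain with transition kernel P and stationary distribution π satisfies the drift condition PV(x) ≤ λV(x) + b·1_C(x) for all x, for some measurable V : X → [1,∞] which is π-a.e. finite, measurable set C, 0 < λ < 1 and b < ∞. Then E_π(V) ≤ b/(1−λ). -/
open MeasureTheory Filter Topology

/-!
Iterating the drift inequality, with the indicator bounded by `1`, gives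
`Pⁿ V ≤ λⁿ V + b / (1 - λ)`. Finiteness of `E_π(V)` is not known in advance, so truncate:
by stationarity `∫ min(V, M) dπ = ∫ Pⁿ min(V, M) dπ ≤ ∫ min(λⁿ V + b / (1 - λ), M) dπ`,
and as `V < ∞` π-a.e., dominated convergence in `n` bounds the left side by `b / (1 - λ)`.
Monotone convergence in `M` concludes.
-/

theorem ENNReal.mul_inv_one_sub_add_one (l : ENNReal) : l * (1 - l)⁻¹ + 1 = (1 - l)⁻¹ := by
  rw [← ENNReal.tsum_geometric_add_one, ← ENNReal.tsum_geometric,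
    tsum_eq_zero_add' (f := (l ^ ·)) ENNReal.summable, pow_zero, add_comm]

theorem lintegral_le_of_forall_lintegral_min_natCast_le {X : Type*} [MeasurableSpace X]
    {μ : Measure X} {V : X → ENNReal} (hV : Measurable V) {c : ENNReal}
    (h : ∀ n : ℕ, ∫⁻ x, min (V x) n ∂μ ≤ c) : ∫⁻ x, V x ∂μ ≤ c := by
  have hsup : ∀ x, ⨆ n : ℕ, min (V x) (n : ENNReal) = V x := fun x => by
    rw [← inf_iSup_eq, ENNReal.iSup_natCast, inf_top_eq]
  calc ∫⁻ x, V x ∂μ = ∫⁻ x, ⨆ n : ℕ, min (V x) n ∂μ := by simp only [hsup]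
    _ = ⨆ n : ℕ, ∫⁻ x, min (V x) n ∂μ :=
        lintegral_iSup (fun n => hV.min measurable_const)
          fun m n hmn x => min_le_min_left _ (Nat.cast_le.mpr hmn)
    _ ≤ c := iSup_le h

section MarkovIterate

variable {X : Type*} [MeasurableSpace X] {P : X → Measure X} {Pn : ℕ → X → Measure X}

theorem isProbabilityMeasure_iterate (hPm : Measurable P) (hP : ∀ x, IsProbabilityMeasure (P x))
    (hPn0 : ∀ x, Pn 0 x = Measure.dirac x) (hPnS : ∀ n x, Pn (n + 1) x = (Pn n x).bind P)
    (n : ℕ) (x : X) : IsProbabilityMeasure (Pn n x) := by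
  induction n generalizing x with
  | zero => rw [hPn0]; infer_instance
  | succ n ih =>
    constructor
    simp [hPnS, Measure.bind_apply MeasurableSet.univ hPm.aemeasurable]

theorem lintegral_lintegral_iterate_of_bind_eq (hPm : Measurable P)
    (hPn0 : ∀ x, Pn 0 x = Measure.dirac x) (hPnS : ∀ n x, Pn (n + 1) x = (Pn n x).bind P)
    {π : Measure X} (hstat : π.bind P = π) (n : ℕ) {f : X → ENNReal} (hf : Measurable f) :
    ∫⁻ x, ∫⁻ y, f y ∂(Pn n x) ∂π = ∫⁻ x, f x ∂π := by
  induction n generalizing f with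
  | zero => simp only [hPn0, lintegral_dirac' _ hf]
  | succ n ih =>
    calc ∫⁻ x, ∫⁻ y, f y ∂(Pn (n + 1) x) ∂π
        = ∫⁻ x, ∫⁻ z, ∫⁻ y, f y ∂(P z) ∂(Pn n x) ∂π := by
          simp only [hPnS, Measure.lintegral_bind hPm.aemeasurable hf.aemeasurable]
      _ = ∫⁻ z, ∫⁻ y, f y ∂(P z) ∂π := ih ((Measure.measurable_lintegral hf).comp hPm)
      _ = ∫⁻ x, f x ∂π := by
          rw [← Measure.lintegral_bind hPm.aemeasurable hf.aemeasurable, hstat]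

theorem lintegral_iterate_le_of_drift (hPm : Measurable P) (hP : ∀ x, IsProbabilityMeasure (P x))
    (hPn0 : ∀ x, Pn 0 x = Measure.dirac x) (hPnS : ∀ n x, Pn (n + 1) x = (Pn n x).bind P)
    {V : X → ENNReal} (hV : Measurable V) {l c : ENNReal}
    (hdrift : ∀ x, ∫⁻ y, V y ∂(P x) ≤ l * V x + c) (n : ℕ) (x : X) :
    ∫⁻ y, V y ∂(Pn n x) ≤ l ^ n * V x + c * (1 - l)⁻¹ := by
  induction n generalizing x with
  | zero => simp [hPn0, lintegral_dirac' x hV]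
  | succ n ih =>
    have := isProbabilityMeasure_iterate hPm hP hPn0 hPnS n x
    calc ∫⁻ y, V y ∂(Pn (n + 1) x)
        = ∫⁻ z, ∫⁻ y, V y ∂(P z) ∂(Pn n x) := by
          rw [hPnS, Measure.lintegral_bind hPm.aemeasurable hV.aemeasurable]
      _ ≤ ∫⁻ z, (l * V z + c) ∂(Pn n x) := lintegral_mono hdrift
      _ = l * ∫⁻ z, V z ∂(Pn n x) + c := by
          rw [lintegral_add_right _ measurable_const, lintegral_const_mul _ hV, lintegral_const,
            measure_univ, mul_one]
      _ ≤ l * (l ^ n * V x + c * (1 - l)⁻¹) + c := by gcongr; exact ih x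
      _ = l ^ (n + 1) * V x + c * (l * (1 - l)⁻¹ + 1) := by ring
      _ = l ^ (n + 1) * V x + c * (1 - l)⁻¹ := by rw [ENNReal.mul_inv_one_sub_add_one]

end MarkovIterate

theorem lintegral_min_le_of_iterate_drift {X : Type*} [MeasurableSpace X]
    {π : Measure X} [IsProbabilityMeasure π] {Q : ℕ → X → Measure X}
    (hQ : ∀ n x, IsProbabilityMeasure (Q n x))
    (hinv : ∀ n (f : X → ENNReal), Measurable f → ∫⁻ x, ∫⁻ y, f y ∂(Q n x) ∂π = ∫⁻ x, f x ∂π)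
    {V : X → ENNReal} (hV : Measurable V) (hVfin : ∀ᵐ x ∂π, V x < ⊤) {l β : ENNReal} (hl : l < 1)
    (hdrift : ∀ n x, ∫⁻ y, V y ∂(Q n x) ≤ l ^ n * V x + β) {M : ENNReal} (hM : M ≠ ⊤) :
    ∫⁻ x, min (V x) M ∂π ≤ β := by
  have hstep : ∀ n, ∫⁻ x, min (V x) M ∂π ≤ ∫⁻ x, min (l ^ n * V x + β) M ∂π := fun n => by
    rw [← hinv n _ (hV.min measurable_const)]
    refine lintegral_mono fun x =>
      le_min ((lintegral_mono fun y => min_le_left _ _).trans (hdrift n x)) ?_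
    calc ∫⁻ y, min (V y) M ∂(Q n x) ≤ ∫⁻ _, M ∂(Q n x) := lintegral_mono fun y => min_le_right _ _
      _ = M := by simp
  have htend : Tendsto (fun n => ∫⁻ x, min (l ^ n * V x + β) M ∂π) atTop
      (𝓝 (∫⁻ _, min β M ∂π)) := by
    refine tendsto_lintegral_of_dominated_convergence (fun _ => M) (fun n => by fun_prop)
      (fun n => .of_forall fun x => min_le_right _ _) (by simpa using hM) ?_
    filter_upwards [hVfin] with x hx
    have hpow : Tendsto (fun n => l ^ n * V x) atTop (𝓝 0) := by
      simpa using ENNReal.Tendsto.mul_const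
        (ENNReal.tendsto_pow_atTop_nhds_zero_of_lt_one hl) (Or.inr hx.ne)
    simpa using (hpow.add_const β).min tendsto_const_nhds
  calc ∫⁻ x, min (V x) M ∂π ≤ ∫⁻ _, min β M ∂π := ge_of_tendsto' htend hstep
    _ ≤ β := by simp

theorem lintegral_le_of_iterate_drift {X : Type*} [MeasurableSpace X]
    {π : Measure X} [IsProbabilityMeasure π] {Q : ℕ → X → Measure X}
    (hQ : ∀ n x, IsProbabilityMeasure (Q n x))
    (hinv : ∀ n (f : X → ENNReal), Measurable f → ∫⁻ x, ∫⁻ y, f y ∂(Q n x) ∂π = ∫⁻ x, f x ∂π)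
    {V : X → ENNReal} (hV : Measurable V) (hVfin : ∀ᵐ x ∂π, V x < ⊤) {l β : ENNReal} (hl : l < 1)
    (hdrift : ∀ n x, ∫⁻ y, V y ∂(Q n x) ≤ l ^ n * V x + β) :
    ∫⁻ x, V x ∂π ≤ β :=
  lintegral_le_of_forall_lintegral_min_natCast_le hV fun n =>
    lintegral_min_le_of_iterate_drift hQ hinv hV hVfin hl hdrift (ENNReal.natCast_ne_top n)

theorem stmt6_general {X : Type*} [MeasurableSpace X]
    (P : X → Measure X) (hPm : Measurable P)
    (hP : ∀ x, IsProbabilityMeasure (P x))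
    (π : Measure X) [IsProbabilityMeasure π]
    (hstat : π.bind P = π)
    (Pn : ℕ → X → Measure X)
    (hPn0 : ∀ x, Pn 0 x = Measure.dirac x)
    (hPnS : ∀ n x, Pn (n+1) x = (Pn n x).bind P)
    (V : X → ENNReal) (hV : Measurable V)
    (hVfin : ∀ᵐ x ∂π, V x < ⊤)
    (C : Set X)
    (lam b : ℝ) (hlam0 : 0 < lam) (hlam1 : lam < 1)
    (hdrift : ∀ x, ∫⁻ y, V y ∂(P x) ≤
      ENNReal.ofReal lam * V x + ENNReal.ofReal b * C.indicator (fun _ => (1:ENNReal)) x) :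
    ∫⁻ x, V x ∂π ≤ ENNReal.ofReal (b / (1 - lam)) := by
  have hdrift' : ∀ x, ∫⁻ y, V y ∂(P x) ≤ ENNReal.ofReal lam * V x + ENNReal.ofReal b :=
    fun x => (hdrift x).trans <| by
      gcongr
      exact mul_le_of_le_one_right' (Set.indicator_apply_le' (fun _ => le_rfl) fun _ => zero_le_one)
  have hβ : ENNReal.ofReal b * (1 - ENNReal.ofReal lam)⁻¹ = ENNReal.ofReal (b / (1 - lam)) := by
    rw [div_eq_mul_inv, ENNReal.ofReal_mul' (inv_pos.2 (sub_pos.2 hlam1)).le,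
      ENNReal.ofReal_inv_of_pos (sub_pos.2 hlam1), ENNReal.ofReal_sub _ hlam0.le, ENNReal.ofReal_one]
  rw [← hβ]
  exact lintegral_le_of_iterate_drift (isProbabilityMeasure_iterate hPm hP hPn0 hPnS)
    (fun n _ hf => lintegral_lintegral_iterate_of_bind_eq hPm hPn0 hPnS hstat n hf) hV hVfin
    (ENNReal.ofReal_lt_one.mpr hlam1) (lintegral_iterate_le_of_drift hPm hP hPn0 hPnS hV hdrift')

/-- Lemma 2: for a φ-irreducible Markov chain with stationary
distribution π satisfying the univariate drift condition
`PV(x) ≤ λ V(x) + b 1_C(x)` with `V ≥ 1` π-a.e. finite, one has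
`E_π(V) ≤ b/(1-λ)`. -/
theorem stmt6 {X : Type*} [MeasurableSpace X]
    (P : X → Measure X) (hPm : Measurable P)
    (hP : ∀ x, IsProbabilityMeasure (P x))
    (π : Measure X) [IsProbabilityMeasure π]
    (hstat : π.bind P = π)
    (Pn : ℕ → X → Measure X)
    (hPn0 : ∀ x, Pn 0 x = Measure.dirac x)
    (hPnS : ∀ n x, Pn (n+1) x = (Pn n x).bind P)
    -- φ-irreducibility
    (φ : Measure X) (hφ : φ ≠ 0)
    (hirr : ∀ S, MeasurableSet S → 0 < φ S → ∀ x, ∃ n, 0 < Pn n x S)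
    (V : X → ENNReal) (hV : Measurable V) (hV1 : ∀ x, 1 ≤ V x)
    (hVfin : ∀ᵐ x ∂π, V x < ⊤)
    (C : Set X) (hC : MeasurableSet C)
    (lam b : ℝ) (hlam0 : 0 < lam) (hlam1 : lam < 1) (hb : 0 ≤ b)
    (hdrift : ∀ x, ∫⁻ y, V y ∂(P x) ≤
      ENNReal.ofReal lam * V x + ENNReal.ofReal b * C.indicator (fun _ => (1:ENNReal)) x) :
    ∫⁻ x, V x ∂π ≤ ENNReal.ofReal (b / (1 - lam)) :=
  stmt6_general P hPm hP π hstat Pn hPn0 hPnS V hV hVfin C lam b hlam0 hlam1 hdrift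
end

section
/- For r_x > 4, ∫_{r_x−1}^{r_x} e^{(1/2)(r + 1/r)} r dr ≤ e^{(1/2)(r_x + 1/r_x)} · ( (840e^{−11/24} − 576)/121 + (24(1 − e^{−11/24})/11)·r_x ). -/
/-!
On `[r_x - 1, r_x]` with `r_x > 4` we have `r * r_x ≥ 12`, so the exponent `(r + 1/r)/2` lies below
its value at `r_x` plus the linear term `(11/24)(r - r_x)`. The integrand is thus dominated by
`exp((r_x + 1/r_x)/2) * exp((11/24)(r - r_x)) * r`, whose integral is computed exactly.
-/

open Real Set intervalIntegral

lemma add_inv_le_add_inv_add_mul_sub {r x k : ℝ} (hr : 0 < r) (hrx : r ≤ x) (hk : 0 < k)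
    (hkrx : k ≤ r * x) : r + r⁻¹ ≤ x + x⁻¹ + (1 - k⁻¹) * (r - x) := by
  have hx : 0 < x := hr.trans_le hrx
  have hsplit : r + r⁻¹ - (x + x⁻¹) = (r - x) * (1 - (r * x)⁻¹) := by
    field_simp
    ring
  have hinv : (r * x)⁻¹ ≤ k⁻¹ := inv_anti₀ hk hkrx
  nlinarith

lemma exp_half_add_inv_mul_le {x r : ℝ} (hx : 4 < x) (hr : r ∈ Icc (x - 1) x) :
    exp (1 / 2 * (r + 1 / r)) * r ≤ exp (1 / 2 * (x + 1 / x)) * (exp (11 / 24 * (r - x)) * r) := by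
  obtain ⟨hr₁, hr₂⟩ := hr
  have hr₀ : 0 < r := by linarith
  have key := add_inv_le_add_inv_add_mul_sub hr₀ hr₂ (k := 12) (by norm_num) (by nlinarith)
  rw [← mul_assoc, ← exp_add]
  gcongr
  simp only [one_div]
  linarith

lemma hasDerivAt_exp_mul_sub_mul {a : ℝ} (ha : a ≠ 0) (x t : ℝ) :
    HasDerivAt (fun s => exp (a * (s - x)) * (s / a - 1 / a ^ 2)) (exp (a * (t - x)) * t) t := by
  have hlin : HasDerivAt (fun s => a * (s - x)) a t := by
    simpa using ((hasDerivAt_id t).sub_const x).const_mul a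
  refine (hlin.exp.mul (((hasDerivAt_id t).div_const a).sub_const (1 / a ^ 2))).congr_deriv ?_
  simp only [id_eq]
  field_simp
  ring

lemma integral_exp_mul_sub_mul_self {a : ℝ} (ha : a ≠ 0) (x b c : ℝ) :
    ∫ t in b..c, exp (a * (t - x)) * t
      = exp (a * (c - x)) * (c / a - 1 / a ^ 2) - exp (a * (b - x)) * (b / a - 1 / a ^ 2) :=
  integral_eq_sub_of_hasDerivAt (fun t _ => hasDerivAt_exp_mul_sub_mul ha x t)
    (Continuous.intervalIntegrable (by fun_prop) _ _)

theorem stmt10 (rx : ℝ) (h : 4 < rx) :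
    (∫ r in (rx-1)..rx, Real.exp ((1/2) * (r + 1/r)) * r)
      ≤ Real.exp ((1/2) * (rx + 1/rx)) *
        ((840 * Real.exp (-(11/24)) - 576) / 121 +
          (24 * (1 - Real.exp (-(11/24))) / 11) * rx) := by
  have hle : rx - 1 ≤ rx := by linarith
  have hint : IntervalIntegrable (fun r => exp (1 / 2 * (r + 1 / r)) * r) MeasureTheory.volume
      (rx - 1) rx := by
    refine ContinuousOn.intervalIntegrable fun r hr => ?_
    rw [uIcc_of_le hle] at hr
    have : r ≠ 0 := by linarith [hr.1]
    fun_prop (disch := assumption)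
  calc (∫ r in (rx-1)..rx, exp (1 / 2 * (r + 1 / r)) * r)
      ≤ ∫ r in (rx-1)..rx, exp (1 / 2 * (rx + 1 / rx)) * (exp (11 / 24 * (r - rx)) * r) :=
        integral_mono_on hle hint (Continuous.intervalIntegrable (by fun_prop) _ _)
          fun r hr => exp_half_add_inv_mul_le h hr
    _ = _ := by
        rw [integral_const_mul, integral_exp_mul_sub_mul_self (by norm_num)]
        norm_num
        ring
end
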